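/- Let D be a finitely aligned left cancellative small category and let G ↷ D be a free action of a finite group G by category automorphisms. Then the quotient category D/G is a finitely aligned left cancellative small category. -/
import Mathlib


universe u v w

/-- A small category encoded on its set of morphisms: objects are identified with
identity morphisms, `src`/`rng` are the source and range maps, and `mul` is the
(total extension of the) partially defined composition, whose axioms below are
only required when `src a = rng b`. -/
structure CatData (C : Type u) where
  src : C → C
  rng : C → C
  mul : C → C → C

namespace CatData

variable {C : Type u} (S : CatData C)

/-- Vertices (objects = identity morphisms). -/
def IsVertex (v : C) : Prop := S.src v = v

/-- The axioms of a small category. -/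
structure IsCat : Prop where
  src_src : ∀ a, S.src (S.src a) = S.src a
  rng_src : ∀ a, S.rng (S.src a) = S.src a
  src_rng : ∀ a, S.src (S.rng a) = S.rng a
  rng_rng : ∀ a, S.rng (S.rng a) = S.rng a
  rng_mul : ∀ a b, S.src a = S.rng b → S.rng (S.mul a b) = S.rng a
  src_mul : ∀ a b, S.src a = S.rng b → S.src (S.mul a b) = S.src b
  mul_assoc' : ∀ a b c, S.src a = S.rng b → S.src b = S.rng c →
      S.mul (S.mul a b) c = S.mul a (S.mul b c)
  id_mul : ∀ a, S.mul (S.rng a) a = a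
  mul_id : ∀ a, S.mul a (S.src a) = a

/-- Left cancellativity (on composable pairs). -/
def LeftCancellative : Prop :=
  ∀ a b c, S.src a = S.rng b → S.src a = S.rng c → S.mul a b = S.mul a c → b = c

/-- The principal right ideal `aC`. -/
def rIdeal (a : C) : Set C := {x | ∃ b, S.src a = S.rng b ∧ x = S.mul a b}

/-- Finite alignment. -/
def FinitelyAligned : Prop :=
  ∀ a b : C, ∃ F : Finset C, S.rIdeal a ∩ S.rIdeal b = ⋃ γ ∈ F, S.rIdeal γ

/-- A subset `F` is independent if `a ∈ bC` for `a, b ∈ F` implies `a = b`. -/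
def Independent (F : Set C) : Prop :=
  ∀ a ∈ F, ∀ b ∈ F, a ∈ S.rIdeal b → a = b

/-- `F` is exhaustive at the vertex `v`: every `a ∈ vC` has
`aC ∩ bC ≠ ∅` for some `b ∈ F`. -/
def Exhaustive (v : C) (F : Set C) : Prop :=
  ∀ a, S.rng a = v → ∃ b ∈ F, (S.rIdeal a ∩ S.rIdeal b).Nonempty

/-- A group-valued cocycle (functor into a group). -/
def IsCocycle {G : Type v} [Group G] (η : C → G) : Prop :=
  ∀ a b, S.src a = S.rng b → η (S.mul a b) = η a * η b

end CatData

/-- The skew product `C ×_η G`: source `(s α, g)`, range `(r α, η(α)g)`, product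
`(α,g)(β,h) = (αβ, h)` (defined when `s α = r β` and `g = η(β)h`). -/
def skewProduct {C : Type u} {G : Type v} [Group G] (S : CatData C) (η : C → G) :
    CatData (C × G) where
  src p := (S.src p.1, p.2)
  rng p := (S.rng p.1, η p.1 * p.2)
  mul p q := (S.mul p.1 q.1, q.2)

/-- An action of a group `G` on a small category by category automorphisms. -/
def IsCatAction {C : Type u} (S : CatData C) {G : Type v} [Group G] (act : G → C → C) : Prop :=
  (∀ a, act 1 a = a) ∧
  (∀ g h a, act g (act h a) = act (g * h) a) ∧
  (∀ g a, S.src (act g a) = act g (S.src a)) ∧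
  (∀ g a, S.rng (act g a) = act g (S.rng a)) ∧
  (∀ g a b, S.src a = S.rng b → S.mul (act g a) (act g b) = act g (S.mul a b))

/-- Freeness of an action. -/
def FreeAction {C : Type u} {G : Type v} [Group G] (act : G → C → C) : Prop :=
  ∀ g a, act g a = a → g = 1

/-- The orbit relation of an action; `Quot (orbRel act)` is the orbit space. -/
def orbRel {C : Type u} {G : Type v} [Group G] (act : G → C → C) : C → C → Prop :=
  fun a b => ∃ g : G, act g a = b

/-- A functor between small categories (in the `CatData` encoding). -/
def IsFunctor {C : Type u} {D : Type v} (S : CatData C) (T : CatData D) (f : C → D) : Prop :=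
  (∀ a, T.src (f a) = f (S.src a)) ∧ (∀ a, T.rng (f a) = f (S.rng a)) ∧
  (∀ a b, S.src a = S.rng b → f (S.mul a b) = T.mul (f a) (f b))

/-- A groupoid: a small category in which every morphism is invertible. -/
def IsGroupoid {C : Type u} (S : CatData C) : Prop :=
  S.IsCat ∧ ∀ a, ∃ b, S.src b = S.rng a ∧ S.rng b = S.src a ∧
    S.mul a b = S.rng a ∧ S.mul b a = S.src a

/-- Connectedness of a small category: the equivalence relation generated by
`{(v,w) : vCw ≠ ∅}` is all of `C⁰ × C⁰`. -/
def ConnectedCat {C : Type u} (S : CatData C) : Prop :=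
  ∀ v w, S.IsVertex v → S.IsVertex w →
    Relation.EqvGen (fun p q => ∃ a, S.src a = q ∧ S.rng a = p) v w

/-- A maximal tree rooted at `x` in a groupoid, given together with the inverses
of its members: `t y ∈ yGx` with `t x = x`. -/
def IsMaxTree {C : Type u} (S : CatData C) (x : C) (t tinv : C → C) : Prop :=
  t x = x ∧ tinv x = x ∧
  ∀ y, S.IsVertex y →
    S.src (t y) = x ∧ S.rng (t y) = y ∧
    S.src (tinv y) = y ∧ S.rng (tinv y) = x ∧
    S.mul (tinv y) (t y) = x ∧ S.mul (t y) (tinv y) = y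

/-- A retraction of a groupoid onto its isotropy group at `x`: a functor into
`G_x` restricting to the identity on `G_x`. -/
def IsRetraction {C : Type u} (S : CatData C) (x : C) (η : C → C) : Prop :=
  (∀ a, S.src (η a) = x ∧ S.rng (η a) = x) ∧
  (∀ vv, S.IsVertex vv → η vv = x) ∧
  (∀ a b, S.src a = S.rng b → η (S.mul a b) = S.mul (η a) (η b)) ∧
  (∀ a, S.src a = x → S.rng a = x → η a = a)

/-- A fundamental groupoid of a small category: a groupoid `T` with a functor
`i`, bijective on vertices, through which every functor into a groupoid factors
uniquely. -/
def IsFundamentalGroupoid {C : Type u} {D : Type v} (S : CatData C) (T : CatData D)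
    (i : C → D) : Prop :=
  IsGroupoid T ∧ IsFunctor S T i ∧
  (∀ v, S.IsVertex v → T.IsVertex (i v)) ∧
  (∀ v w', S.IsVertex v → S.IsVertex w' → i v = i w' → v = w') ∧
  (∀ p, T.IsVertex p → ∃ v, S.IsVertex v ∧ i v = p) ∧
  ∀ (E : Type w) (TE : CatData E), IsGroupoid TE → ∀ f : C → E, IsFunctor S TE f →
    ∃! f' : D → E, IsFunctor T TE f' ∧ ∀ a, f a = f' (i a)

/-- `(U, j)` is a universal group of the small category `S`: `j` is a cocycle and
every group-valued cocycle factors uniquely through `j` via a group homomorphism. -/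
def IsUniversalGroup {C : Type u} (S : CatData C) (U : Type v) [Group U] (j : C → U) : Prop :=
  S.IsCocycle j ∧
  ∀ (H : Type w) (instH : Group H) (ψ : C → H), S.IsCocycle ψ →
    ∃! ψ' : U →* H, ∀ a, ψ a = ψ' (j a)

/-- A cocycle on the part of a small category lying in the set `P`. -/
def IsCocycleOn {C : Type u} (S : CatData C) (P : C → Prop) {H : Type v} [Group H]
    (ψ : C → H) : Prop :=
  ∀ a b, P a → P b → S.src a = S.rng b → ψ (S.mul a b) = ψ a * ψ b

/-- `(U, j)` is a universal group of the restriction of `S` to the set `P`. -/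
def IsUniversalGroupOn {C : Type u} (S : CatData C) (P : C → Prop) (U : Type v) [Group U]
    (j : C → U) : Prop :=
  IsCocycleOn S P j ∧
  ∀ (H : Type w) (instH : Group H) (ψ : C → H), IsCocycleOn S P ψ →
    ∃! ψ' : U →* H, ∀ a, P a → ψ a = ψ' (j a)

/-- The generator `z̄` of the free product `𝔽(C⁰ \ {x}) ∗ H`: the free generator
corresponding to the vertex `z` when `z ≠ x`, and the identity when `z = x`. -/
noncomputable def vbar {C : Type u} (S : CatData C) (x : C) (H : Type v) [Group H] (z : C) :
    Monoid.Coprod (FreeGroup {y : C // S.IsVertex y ∧ y ≠ x}) H :=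
  haveI := Classical.dec (S.IsVertex z ∧ z ≠ x)
  if hz : S.IsVertex z ∧ z ≠ x then
    Monoid.Coprod.inl (FreeGroup.of (⟨z, hz⟩ : {y : C // S.IsVertex y ∧ y ≠ x}))
  else 1

section Aux

variable {D : Type u} {G : Type v} [Group G] (S : CatData D)
  (act : G → D → D)

theorem orbRel_equivalence (hact : IsCatAction S act) : Equivalence (orbRel act) := by
  obtain ⟨h1, hm, -, -, -⟩ := hact
  constructor
  · exact fun a => ⟨1, h1 a⟩
  · rintro a b ⟨g, rfl⟩
    exact ⟨g⁻¹, by rw [hm, inv_mul_cancel, h1]⟩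
  · rintro a b c ⟨g, rfl⟩ ⟨h, rfl⟩
    exact ⟨h * g, (hm h g a).symm⟩

theorem quot_mk_eq_iff (hact : IsCatAction S act) (a b : D) :
    Quot.mk (orbRel act) a = Quot.mk (orbRel act) b ↔ ∃ g, act g a = b := by
  rw [Quot.eq, (orbRel_equivalence S act hact).eqvGen_iff]
  rfl

/-- the quotient ideal is the image of the ideal -/
theorem quot_rIdeal (hact : IsCatAction S act) (T : CatData (Quot (orbRel act)))
    (hTsrc : ∀ l : D, T.src (Quot.mk (orbRel act) l) = Quot.mk (orbRel act) (S.src l))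
    (hTrng : ∀ l : D, T.rng (Quot.mk (orbRel act) l) = Quot.mk (orbRel act) (S.rng l))
    (hTmul : ∀ (l m : D) (g : G), S.src l = S.rng (act g m) →
      T.mul (Quot.mk (orbRel act) l) (Quot.mk (orbRel act) m) =
        Quot.mk (orbRel act) (S.mul l (act g m)))
    (a : D) :
    T.rIdeal (Quot.mk (orbRel act) a) = Quot.mk (orbRel act) '' (S.rIdeal a) := by
  obtain ⟨h1, hm, hs, hr, hmul⟩ := id hact
  ext x
  constructor
  · rintro ⟨c, hcomp, rfl⟩
    obtain ⟨m, rfl⟩ := Quot.exists_rep c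
    rw [hTsrc, hTrng, quot_mk_eq_iff S act hact] at hcomp
    obtain ⟨g, hg⟩ := hcomp
    have hcomp' : S.src a = S.rng (act g⁻¹ m) := by
      rw [hr, ← hg, hm, inv_mul_cancel, h1]
    refine ⟨S.mul a (act g⁻¹ m), ⟨act g⁻¹ m, hcomp', rfl⟩, (hTmul a m g⁻¹ hcomp').symm⟩
  · rintro ⟨y, ⟨c, hcomp, rfl⟩, rfl⟩
    have h1c : S.src a = S.rng (act 1 c) := by rw [h1]; exact hcomp
    refine ⟨Quot.mk _ c, ?_, ?_⟩
    · rw [hTsrc, hTrng, hcomp]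
    · rw [hTmul a c 1 h1c, h1]

theorem act_rIdeal (hact : IsCatAction S act) (a : D) (g : G) :
    ∀ y, y ∈ S.rIdeal a → act g y ∈ S.rIdeal (act g a) := by
  obtain ⟨h1, hm, hs, hr, hmul⟩ := hact
  rintro y ⟨c, hcomp, rfl⟩
  exact ⟨act g c, by rw [hs, hr, hcomp], (hmul g a c hcomp).symm⟩

end Aux

/-- the quotient of a finitely aligned LCSC by a free action of a
finite group is a finitely aligned LCSC. -/
theorem quotient_finitelyAligned_of_finite {D : Type u} {G : Type v} [Group G] [Finite G]
    (S : CatData D) (hC : S.IsCat) (hLC : S.LeftCancellative) (hFA : S.FinitelyAligned)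
    (act : G → D → D) (hact : IsCatAction S act) (hfree : FreeAction act)
    (T : CatData (Quot (orbRel act))) (hTcat : T.IsCat)
    (hTsrc : ∀ l : D, T.src (Quot.mk (orbRel act) l) = Quot.mk (orbRel act) (S.src l))
    (hTrng : ∀ l : D, T.rng (Quot.mk (orbRel act) l) = Quot.mk (orbRel act) (S.rng l))
    (hTmul : ∀ (l m : D) (g : G), S.src l = S.rng (act g m) →
      T.mul (Quot.mk (orbRel act) l) (Quot.mk (orbRel act) m) =
        Quot.mk (orbRel act) (S.mul l (act g m))) :
    T.LeftCancellative ∧ T.FinitelyAligned := by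
  obtain ⟨h1, hm, hs, hr, hmul⟩ := hact
  have hacti : IsCatAction S act := ⟨h1, hm, hs, hr, hmul⟩
  have hinv : ∀ (g : G) (x : D), act g⁻¹ (act g x) = x := fun g x => by
    rw [hm, inv_mul_cancel, h1]
  constructor
  · -- left cancellative
    intro a b c hab hac hmul'
    obtain ⟨l, rfl⟩ := Quot.exists_rep a
    obtain ⟨m, rfl⟩ := Quot.exists_rep b
    obtain ⟨n, rfl⟩ := Quot.exists_rep c
    rw [hTsrc, hTrng, quot_mk_eq_iff S act hacti] at hab hac
    obtain ⟨g, hg⟩ := hab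
    obtain ⟨h, hh⟩ := hac
    have hcm : S.src l = S.rng (act g⁻¹ m) := by rw [hr, ← hg, hinv]
    have hcn : S.src l = S.rng (act h⁻¹ n) := by rw [hr, ← hh, hinv]
    rw [hTmul l m g⁻¹ hcm, hTmul l n h⁻¹ hcn, quot_mk_eq_iff S act hacti] at hmul'
    obtain ⟨k, hk⟩ := hmul'
    rw [← hmul k l (act g⁻¹ m) hcm] at hk
    have hck : S.src (act k l) = S.rng (act k (act g⁻¹ m)) := by
      rw [hs, hr, hcm]
    have hrng : act k (S.rng l) = S.rng l := by
      have := hC.rng_mul (act k l) (act k (act g⁻¹ m)) hck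
      rw [hk, hC.rng_mul l (act h⁻¹ n) hcn, hr] at this
      exact this.symm
    have hk1 : k = 1 := hfree k _ hrng
    rw [hk1] at hk
    simp only [h1] at hk
    have := hLC l (act g⁻¹ m) (act h⁻¹ n) hcm hcn hk
    rw [quot_mk_eq_iff S act hacti]
    refine ⟨h * g⁻¹, ?_⟩
    rw [← hm, this, hm, mul_inv_cancel, h1]
  · -- finitely aligned
    intro a b
    obtain ⟨l, rfl⟩ := Quot.exists_rep a
    obtain ⟨m, rfl⟩ := Quot.exists_rep b
    classical
    haveI : Fintype G := Fintype.ofFinite G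
    choose F hF using fun g : G => hFA l (act g m)
    set Fset : Set (Quot (orbRel act)) :=
      Quot.mk (orbRel act) '' (⋃ g : G, (F g : Set D)) with hFset
    have hfin : Fset.Finite :=
      (Set.finite_iUnion (fun g => (F g).finite_toSet)).image _
    refine ⟨hfin.toFinset, ?_⟩
    have key : S.rIdeal l ∩ ⋃ g : G, S.rIdeal (act g m)
        = ⋃ g : G, (S.rIdeal l ∩ S.rIdeal (act g m)) := by
      rw [Set.inter_iUnion]
    ext x
    simp only [Set.mem_inter_iff, Set.mem_iUnion, Set.Finite.mem_toFinset]
    constructor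
    · rintro ⟨hxl, hxm⟩
      rw [quot_rIdeal S act hacti T hTsrc hTrng hTmul] at hxl hxm
      obtain ⟨y, hy, rfl⟩ := hxl
      obtain ⟨z, hz, hzy⟩ := hxm
      rw [quot_mk_eq_iff S act hacti] at hzy
      obtain ⟨k, rfl⟩ := hzy
      have hym : act k z ∈ S.rIdeal (act k m) := act_rIdeal S act hacti m k z hz
      have : act k z ∈ ⋃ γ ∈ F k, S.rIdeal γ := by
        rw [← hF k]; exact ⟨hy, hym⟩
      simp only [Set.mem_iUnion] at this
      obtain ⟨γ, hγF, hγ⟩ := this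
      refine ⟨Quot.mk _ γ, Set.mem_image_of_mem _
        (Set.mem_iUnion.2 ⟨k, hγF⟩), ?_⟩
      rw [quot_rIdeal S act hacti T hTsrc hTrng hTmul]
      exact Set.mem_image_of_mem _ hγ
    · rintro ⟨i, hi, hxi⟩
      obtain ⟨γ, hγmem, rfl⟩ := hi
      obtain ⟨g, hγF⟩ := Set.mem_iUnion.1 hγmem
      rw [quot_rIdeal S act hacti T hTsrc hTrng hTmul] at hxi
      obtain ⟨y, hy, rfl⟩ := hxi
      have hyboth : y ∈ S.rIdeal l ∩ S.rIdeal (act g m) := by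
        rw [hF g]
        exact Set.mem_iUnion.2 ⟨γ, Set.mem_iUnion.2 ⟨hγF, hy⟩⟩
      obtain ⟨hyl, hym⟩ := hyboth
      constructor
      · rw [quot_rIdeal S act hacti T hTsrc hTrng hTmul]
        exact Set.mem_image_of_mem _ hyl
      · rw [quot_rIdeal S act hacti T hTsrc hTrng hTmul]
        have : act g⁻¹ y ∈ S.rIdeal (act g⁻¹ (act g m)) :=
          act_rIdeal S act hacti (act g m) g⁻¹ y hym
        rw [hinv] at this
        refine ⟨act g⁻¹ y, this, ?_⟩
        rw [quot_mk_eq_iff S act hacti]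
        exact ⟨g⁻¹⁻¹, hinv g⁻¹ y⟩
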